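/- arXiv:2011.01859 — 4 statements merged into one kernel-verified Lean document; each statement's English description precedes it below -/
import Mathlib

section
/- Consider the random walk on {0,…,L} started at s0, with i.i.d. steps equal to +1 with probability p and −1 with probability 1−p, absorbed upon first reaching 0 or L at the (almost surely finite) absorption time T. Fix terminal rewards λ_0, λ_L ∈ ℝ and let G = λ_{X_T} − T be the episodic return. Then for every g ∈ ℝ, P(G = g) equals the sum, over those s ∈ {0, L} for which t := λ_s − g is an integer with t ≥ 1 and s − s0 + t even, of (1−p)^{t−r} p^{r} · a_{s0,L}(t,r), where r = (s − s0 + t)/2 and a_{s0,L}(t,r) = Σ_{k∈ℤ} [C(t−1, r′+kL) − C(t−1, r′+s0+kL)] with r′ = r if s = 0 and r′ = r−1 if s = L. -/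
/-!
Split the event by the exit side `s ∈ {0, L}` and the exit time `t = n + 1`. Up to a null set
(steps are `±1` almost surely), exiting at `s` at time `n + 1` means staying in `(0, L)` up to
time `n`, being at the neighbour of `s`, and then stepping towards `s`; since step `n` is
independent of the first `n` steps, this factorises. The probability of staying in `(0, L)` up to
time `n` and ending at `s0 + 2u - n` is `p ^ u (1 - p) ^ (n - u)` times the number of such paths,
and that number is the method-of-images sum `imageSum`: both sides satisfy the same one-step
recursion, vanish at `0` and `L`, and agree at time `0`.
-/

open MeasureTheory ProbabilityTheory
open scoped Classical

def Cb (n : ℕ) (k : ℤ) : ℤ := if 0 ≤ k ∧ k ≤ (n : ℤ) then (n.choose k.toNat : ℤ) else 0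

lemma Cb_zero (k : ℤ) : Cb 0 k = if k = 0 then 1 else 0 := by
  unfold Cb
  split_ifs <;> first | rfl | omega | simp_all

lemma Cb_succ (n : ℕ) (k : ℤ) : Cb (n + 1) k = Cb n (k - 1) + Cb n k := by
  unfold Cb
  split_ifs with h1 h2 h3 h2 h3
  · rw [show k.toNat = (k - 1).toNat + 1 by omega, Nat.choose_succ_succ]
    push_cast; ring
  · rw [show k.toNat = n + 1 by omega, show (k - 1).toNat = n by omega, Nat.choose_self,
      Nat.choose_self]; ring
  · rw [show k.toNat = 0 by omega, Nat.choose_zero_right, Nat.choose_zero_right]; ring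
  all_goals omega

lemma Cb_symm (n : ℕ) (k : ℤ) : Cb n k = Cb n (n - k) := by
  unfold Cb
  split_ifs with h1 h2 h2
  · rw [show ((n : ℤ) - k).toNat = n - k.toNat by omega, Nat.choose_symm (by omega)]
  all_goals first | rfl | omega

lemma summable_Cb_add_mul {L : ℕ} (hL : 0 < L) (n : ℕ) (a : ℤ) :
    Summable fun k : ℤ => (Cb n (a + k * L) : ℝ) := by
  refine summable_of_ne_finset_zero (s := Finset.Icc (-(|a| + n)) (|a| + n)) fun k hk => ?_
  have hL1 : (1 : ℤ) ≤ L := by exact_mod_cast hL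
  rw [Finset.mem_Icc, not_and_or, not_le, not_le] at hk
  have : ¬ (0 ≤ a + k * L ∧ a + k * L ≤ n) := by
    rintro ⟨h0, hn⟩
    rcases hk with hk | hk
    · have := mul_le_mul_of_nonpos_left hL1 (by linarith [abs_nonneg a] : k ≤ 0)
      linarith [le_abs_self a]
    · have := mul_le_mul_of_nonneg_left hL1 (by linarith [abs_nonneg a] : 0 ≤ k)
      linarith [neg_abs_le a]
  simp [Cb, this]

/-- Method of images for the number of `n`-step `±1` paths from `s0` with `u` up-steps (so
ending at `x = s0 + 2u - n`) that stay in `(0, L)`: `Cb n (u + k * L)` counts the free paths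
from `s0` to `x + 2kL`, and `Cb n (u + s0 + k * L)` those from the reflected start `-s0`. -/
noncomputable def imageSum (L : ℕ) (s0 : ℤ) (n : ℕ) (u : ℤ) : ℝ :=
  ∑' k : ℤ, ((Cb n (u + k * L) : ℝ) - (Cb n (u + s0 + k * L) : ℝ))

section Images

variable {L : ℕ} {s0 : ℤ}

lemma imageSum_succ (hL : 0 < L) (n : ℕ) (u : ℤ) :
    imageSum L s0 (n + 1) u = imageSum L s0 n (u - 1) + imageSum L s0 n u := by
  unfold imageSum
  rw [← Summable.tsum_add
    ((summable_Cb_add_mul hL n _).sub (summable_Cb_add_mul hL n _))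
    ((summable_Cb_add_mul hL n _).sub (summable_Cb_add_mul hL n _))]
  refine tsum_congr fun k => ?_
  rw [Cb_succ, Cb_succ]
  push_cast
  ring_nf

/-- The endpoint `s0 + 2u - n = -jL` lies on a reflecting line, and `k ↦ j - k` swaps the two
families of images. -/
lemma imageSum_eq_zero (hL : 0 < L) {n : ℕ} {u : ℤ} (j : ℤ) (h : (n : ℤ) = 2 * u + s0 + j * L) :
    imageSum L s0 n u = 0 := by
  unfold imageSum
  rw [Summable.tsum_sub (summable_Cb_add_mul hL n _) (summable_Cb_add_mul hL n _), sub_eq_zero,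
    ← (Equiv.subLeft j).tsum_eq]
  refine tsum_congr fun k => ?_
  rw [Cb_symm, Equiv.subLeft_apply]
  congr 2
  linear_combination h

lemma imageSum_zero (hs0 : 0 < s0) (hs0L : s0 < L) {u : ℤ} (hu : 0 < s0 + 2 * u)
    (huL : s0 + 2 * u < L) : imageSum L s0 0 u = if u = 0 then 1 else 0 := by
  unfold imageSum
  simp only [Cb_zero]
  rw [tsum_eq_single 0]
  · simp only [zero_mul, add_zero]
    split_ifs <;> first | omega | norm_num
  · intro k hk
    have h1 : u + k * L ≠ 0 := by
      rcases lt_or_gt_of_ne hk with h | h <;> nlinarith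
    have h2 : u + s0 + k * L ≠ 0 := by
      rcases lt_or_gt_of_ne hk with h | h <;> nlinarith
    simp [h1, h2]

end Images

section Walk

variable {Ω : Type*}

def walk (s0 : ℤ) (ξ : ℕ → Ω → ℤ) (k : ℕ) (ω : Ω) : ℤ := s0 + ∑ i ∈ Finset.range k, ξ i ω

def insideUntil (L : ℕ) (s0 : ℤ) (ξ : ℕ → Ω → ℤ) (n : ℕ) (x : ℤ) : Set Ω :=
  {ω | (∀ k ≤ n, walk s0 ξ k ω ∈ Set.Ioo 0 (L : ℤ)) ∧ walk s0 ξ n ω = x}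

def firstExit (L : ℕ) (s0 : ℤ) (ξ : ℕ → Ω → ℤ) (t : ℕ) (b : ℤ) : Set Ω :=
  {ω | (∀ k < t, walk s0 ξ k ω ≠ 0 ∧ walk s0 ξ k ω ≠ L) ∧ walk s0 ξ t ω = b}

variable {L : ℕ} {s0 : ℤ} {ξ : ℕ → Ω → ℤ}

@[simp] lemma walk_zero (ω : Ω) : walk s0 ξ 0 ω = s0 := by simp [walk]

lemma walk_succ (k : ℕ) (ω : Ω) : walk s0 ξ (k + 1) ω = walk s0 ξ k ω + ξ k ω := by
  simp [walk, Finset.sum_range_succ, add_assoc]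

lemma insideUntil_eq_empty {x : ℤ} (hx : x ∉ Set.Ioo 0 (L : ℤ)) (n : ℕ) :
    insideUntil L s0 ξ n x = ∅ :=
  Set.eq_empty_of_forall_notMem fun _ ⟨hin, hn⟩ => hx (hn ▸ hin n le_rfl)

lemma insideUntil_zero_of_ne {x : ℤ} (hx : x ≠ s0) : insideUntil L s0 ξ 0 x = ∅ :=
  Set.eq_empty_of_forall_notMem fun ω ⟨_, h⟩ => hx (by rw [← h, walk_zero])

lemma insideUntil_zero_self (hs0 : 0 < s0) (hs0L : s0 < L) :
    insideUntil L s0 ξ 0 s0 = Set.univ :=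
  Set.eq_univ_of_forall fun ω =>
    ⟨fun k hk => by rw [Nat.le_zero.1 hk, walk_zero]; exact ⟨hs0, hs0L⟩, walk_zero ω⟩

lemma firstExit_zero_of_ne {b : ℤ} (hb : b ≠ s0) : firstExit L s0 ξ 0 b = ∅ :=
  Set.eq_empty_of_forall_notMem fun ω ⟨_, h⟩ => hb (by rw [← h, walk_zero])

lemma mem_insideUntil_succ_iff {n : ℕ} {x : ℤ} {ω : Ω} (hx : x ∈ Set.Ioo 0 (L : ℤ))
    (hω : ξ n ω = 1 ∨ ξ n ω = -1) :
    ω ∈ insideUntil L s0 ξ (n + 1) x ↔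
      ω ∈ insideUntil L s0 ξ n (x - 1) ∧ ξ n ω = 1 ∨
        ω ∈ insideUntil L s0 ξ n (x + 1) ∧ ξ n ω = -1 := by
  simp only [insideUntil, Set.mem_ofPred_eq, walk_succ]
  constructor
  · rintro ⟨hin, hx'⟩
    have hin' : ∀ k ≤ n, walk s0 ξ k ω ∈ Set.Ioo 0 (L : ℤ) := fun k hk => hin k (by omega)
    rcases hω with h | h
    · exact Or.inl ⟨⟨hin', by omega⟩, h⟩
    · exact Or.inr ⟨⟨hin', by omega⟩, h⟩
  · rintro (⟨⟨hin, hn⟩, h⟩ | ⟨⟨hin, hn⟩, h⟩) <;> refine ⟨fun k hk => ?_, by omega⟩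
    all_goals
      obtain hk | rfl := Nat.le_succ_iff.1 hk
      · exact hin k hk
      · rw [walk_succ, hn, h]; simpa using hx

lemma walk_mem_Ioo_of_forall_ne (hs0 : 0 < s0) (hs0L : s0 < L) {t : ℕ} {ω : Ω}
    (hstep : ∀ i, ξ i ω = 1 ∨ ξ i ω = -1)
    (hav : ∀ k < t, walk s0 ξ k ω ≠ 0 ∧ walk s0 ξ k ω ≠ L) :
    ∀ k < t, walk s0 ξ k ω ∈ Set.Ioo 0 (L : ℤ) := by
  intro k
  induction k with
  | zero => intro _; rw [walk_zero]; exact ⟨hs0, hs0L⟩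
  | succ k ih =>
    intro hk
    have h1 := ih (by omega)
    have h2 := hav (k + 1) hk
    rw [walk_succ] at h2 ⊢
    simp only [Set.mem_Ioo] at h1 ⊢
    rcases hstep k with h | h <;> omega

lemma mem_firstExit_succ_iff (hs0 : 0 < s0) (hs0L : s0 < L) {n : ℕ} {b c : ℤ} {ω : Ω}
    (hc : c = 1 ∨ c = -1) (hbc : b + c ∉ Set.Ioo 0 (L : ℤ))
    (hstep : ∀ i, ξ i ω = 1 ∨ ξ i ω = -1) :
    ω ∈ firstExit L s0 ξ (n + 1) b ↔ ω ∈ insideUntil L s0 ξ n (b - c) ∧ ξ n ω = c := by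
  simp only [firstExit, insideUntil, Set.mem_ofPred_eq, walk_succ]
  constructor
  · rintro ⟨hav, hb⟩
    have hin := walk_mem_Ioo_of_forall_ne hs0 hs0L hstep hav
    have hn := hin n (by omega)
    have hξ : ξ n ω = c := by
      simp only [Set.mem_Ioo] at hn hbc
      rcases hstep n with h | h <;> omega
    exact ⟨⟨fun k hk => hin k (by omega), by omega⟩, hξ⟩
  · rintro ⟨⟨hin, hn⟩, hξ⟩
    refine ⟨fun k hk => ?_, by omega⟩
    have := hin k (by omega)
    simp only [Set.mem_Ioo] at this
    omega

lemma disjoint_firstExit {s s' : ℤ} (hs : s = 0 ∨ s = L) (hs' : s' = 0 ∨ s' = L) {t t' : ℕ}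
    (h : t ≠ t' ∨ s ≠ s') : Disjoint (firstExit L s0 ξ t s) (firstExit L s0 ξ t' s') := by
  rw [Set.disjoint_left]
  rintro ω ⟨hav, hs_eq⟩ ⟨hav', hs_eq'⟩
  rcases lt_trichotomy t t' with ht | rfl | ht
  · have := hav' t ht; omega
  · omega
  · have := hav t' ht; omega

lemma setOf_exists_firstExit (hs0 : 0 < s0) (hs0L : s0 < L) (lam0 lamL g : ℝ) :
    {ω | ∃ t : ℕ, 0 < t ∧ (∀ k < t, walk s0 ξ k ω ≠ 0 ∧ walk s0 ξ k ω ≠ L) ∧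
        (walk s0 ξ t ω = 0 ∨ walk s0 ξ t ω = L) ∧
        g = (if walk s0 ξ t ω = 0 then lam0 else lamL) - t} =
      ⋃ s ∈ ({0, (L : ℤ)} : Finset ℤ), ⋃ t : ℕ,
        {ω | ω ∈ firstExit L s0 ξ t s ∧ (if s = 0 then lam0 else lamL) - g = t} := by
  ext ω
  simp only [Set.mem_iUnion, Finset.mem_insert, Finset.mem_singleton, firstExit,
    Set.mem_ofPred_eq]
  constructor
  · rintro ⟨t, -, hav, hb, hg⟩
    exact ⟨_, hb, t, ⟨hav, rfl⟩, by linarith⟩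
  · rintro ⟨s, hs, t, ⟨hav, rfl⟩, hg⟩
    refine ⟨t, Nat.pos_of_ne_zero ?_, hav, hs, by linarith⟩
    rintro rfl
    rw [walk_zero] at hs
    omega

abbrev pastSteps (ξ : ℕ → Ω → ℤ) (n : ℕ) : MeasurableSpace Ω :=
  ⨆ i ∈ Set.Iio n, MeasurableSpace.comap (ξ i) inferInstance

lemma measurable_walk_pastSteps {n k : ℕ} (hk : k ≤ n) :
    Measurable[pastSteps ξ n] (walk s0 ξ k) :=
  measurable_const.add <| Finset.measurable_sum _ fun i hi =>
    (comap_measurable (ξ i)).mono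
      (le_iSup₂ (f := fun i _ => MeasurableSpace.comap (ξ i) inferInstance) i
        (Set.mem_Iio.2 (lt_of_lt_of_le (Finset.mem_range.1 hi) hk))) le_rfl

lemma measurableSet_insideUntil_pastSteps (n : ℕ) (x : ℤ) :
    MeasurableSet[pastSteps ξ n] (insideUntil L s0 ξ n x) := by
  let _ : MeasurableSpace Ω := pastSteps ξ n
  refine MeasurableSet.inter ?_ (measurable_walk_pastSteps le_rfl (measurableSet_singleton x))
  exact measurableSet_setOfPred.2 <| .forall fun k => .forall fun hk =>
    measurableSet_setOfPred.1 (measurable_walk_pastSteps hk measurableSet_Ioo)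

end Walk

lemma measureReal_iUnion_eq_tsum {α ι : Type*} [MeasurableSpace α] {μ : Measure α}
    [IsFiniteMeasure μ] [Countable ι] {f : ι → Set α} (hd : Pairwise (Function.onFun Disjoint f))
    (hm : ∀ i, MeasurableSet (f i)) : μ.real (⋃ i, f i) = ∑' i, μ.real (f i) := by
  simp only [measureReal_def, measure_iUnion hd hm,
    ENNReal.tsum_toReal_eq fun i => measure_ne_top μ (f i)]

structure IsBernoulliSteps {Ω : Type*} [MeasurableSpace Ω] (P : Measure Ω) (p : ℝ)
    (ξ : ℕ → Ω → ℤ) : Prop where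
  measurable : ∀ i, Measurable (ξ i)
  indep : iIndepFun ξ P
  prob_up : ∀ i, P {ω | ξ i ω = 1} = ENNReal.ofReal p
  prob_down : ∀ i, P {ω | ξ i ω = -1} = ENNReal.ofReal (1 - p)

namespace IsBernoulliSteps

variable {Ω : Type*} [MeasurableSpace Ω] {P : Measure Ω} {p : ℝ}
  {ξ : ℕ → Ω → ℤ} {L : ℕ} {s0 : ℤ}

lemma measurable_walk (h : IsBernoulliSteps P p ξ) (k : ℕ) : Measurable (walk s0 ξ k) :=
  measurable_const.add <| Finset.measurable_sum _ fun i _ => h.measurable i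

lemma pastSteps_le (h : IsBernoulliSteps P p ξ) (n : ℕ) : pastSteps ξ n ≤ ‹MeasurableSpace Ω› :=
  iSup₂_le fun i _ => (h.measurable i).comap_le

lemma measurableSet_insideUntil (h : IsBernoulliSteps P p ξ) (n : ℕ) (x : ℤ) :
    MeasurableSet (insideUntil L s0 ξ n x) :=
  h.pastSteps_le n _ (measurableSet_insideUntil_pastSteps n x)

lemma measurableSet_firstExit (h : IsBernoulliSteps P p ξ) (t : ℕ) (b : ℤ) :
    MeasurableSet (firstExit L s0 ξ t b) := by
  refine MeasurableSet.inter ?_ (h.measurable_walk t (measurableSet_singleton b))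
  exact measurableSet_setOfPred.2 <| .forall fun k => .forall fun _ =>
    measurableSet_setOfPred.1 <| (h.measurable_walk k (measurableSet_singleton 0)).compl.inter
      (h.measurable_walk k (measurableSet_singleton _)).compl

lemma measureReal_up (h : IsBernoulliSteps P p ξ) (hp : 0 ≤ p) (i : ℕ) :
    P.real {ω | ξ i ω = 1} = p := by
  rw [measureReal_def, h.prob_up, ENNReal.toReal_ofReal hp]

lemma measureReal_down (h : IsBernoulliSteps P p ξ) (hp : p ≤ 1) (i : ℕ) :
    P.real {ω | ξ i ω = -1} = 1 - p := by
  rw [measureReal_def, h.prob_down, ENNReal.toReal_ofReal (by linarith)]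

lemma measureReal_inter_step (h : IsBernoulliSteps P p ξ) {n : ℕ} {A : Set Ω}
    (hA : MeasurableSet[pastSteps ξ n] A) (c : ℤ) :
    P.real (A ∩ {ω | ξ n ω = c}) = P.real A * P.real {ω | ξ n ω = c} := by
  have hind := indep_iSup_of_disjoint (fun i => (h.measurable i).comap_le)
    ((iIndepFun_iff_iIndep _ _ _).1 h.indep) (S := Set.Iio n) (T := {n}) (by simp)
  have hc : MeasurableSet[⨆ i ∈ ({n} : Set ℕ), MeasurableSpace.comap (ξ i) inferInstance]
      {ω | ξ n ω = c} :=
    le_iSup₂ (f := fun i (_ : i ∈ ({n} : Set ℕ)) => MeasurableSpace.comap (ξ i) inferInstance)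
      n rfl _ ⟨{c}, measurableSet_singleton c, rfl⟩
  simp only [measureReal_def, (Indep_iff _ _ _).1 hind A _ hA hc, ENNReal.toReal_mul]

variable [IsProbabilityMeasure P]

lemma ae_step (h : IsBernoulliSteps P p ξ) : ∀ᵐ ω ∂P, ∀ i, ξ i ω = 1 ∨ ξ i ω = -1 := by
  refine ae_all_iff.2 fun i => ?_
  have hmeas : MeasurableSet {ω | ξ i ω = 1 ∨ ξ i ω = -1} :=
    (h.measurable i (measurableSet_singleton 1)).union
      (h.measurable i (measurableSet_singleton (-1)))
  have hdisj : Disjoint {ω | ξ i ω = 1} {ω | ξ i ω = -1} :=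
    Set.disjoint_left.2 fun ω h1 h2 => by simp_all
  refine ae_iff.2 <| (prob_compl_eq_zero_iff hmeas).2 <| le_antisymm prob_le_one ?_
  calc (1 : ENNReal) = ENNReal.ofReal (p + (1 - p)) := by norm_num
    _ ≤ ENNReal.ofReal p + ENNReal.ofReal (1 - p) := ENNReal.ofReal_add_le
    _ = P {ω | ξ i ω = 1 ∨ ξ i ω = -1} := by
      rw [← h.prob_up i, ← h.prob_down i, ← measure_union hdisj
        (h.measurable i (measurableSet_singleton (-1)))]
      rfl

lemma measureReal_insideUntil_succ (h : IsBernoulliSteps P p ξ) (n : ℕ) {x : ℤ}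
    (hx : x ∈ Set.Ioo 0 (L : ℤ)) :
    P.real (insideUntil L s0 ξ (n + 1) x) =
      P.real (insideUntil L s0 ξ n (x - 1)) * P.real {ω | ξ n ω = 1} +
        P.real (insideUntil L s0 ξ n (x + 1)) * P.real {ω | ξ n ω = -1} := by
  have hae : insideUntil L s0 ξ (n + 1) x =ᵐ[P]
      ((insideUntil L s0 ξ n (x - 1) ∩ {ω | ξ n ω = 1}) ∪
        (insideUntil L s0 ξ n (x + 1) ∩ {ω | ξ n ω = -1}) : Set Ω) :=
    Filter.eventuallyEq_set.2 <| h.ae_step.mono fun ω hω => mem_insideUntil_succ_iff hx (hω n)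
  have hdisj : Disjoint (insideUntil L s0 ξ n (x - 1) ∩ {ω | ξ n ω = 1})
      (insideUntil L s0 ξ n (x + 1) ∩ {ω | ξ n ω = -1}) :=
    Set.disjoint_left.2 fun ω h1 h2 => by have := h1.2.symm.trans h2.2; omega
  rw [measureReal_congr hae, measureReal_union hdisj ((h.measurableSet_insideUntil n _).inter
      (h.measurable n (measurableSet_singleton _))),
    h.measureReal_inter_step (measurableSet_insideUntil_pastSteps n _),
    h.measureReal_inter_step (measurableSet_insideUntil_pastSteps n _)]

lemma measureReal_insideUntil_of_not_dvd (h : IsBernoulliSteps P p ξ) :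
    ∀ (n : ℕ) (x : ℤ), ¬ 2 ∣ x - s0 + n → P.real (insideUntil L s0 ξ n x) = 0 := by
  intro n
  induction n with
  | zero =>
    intro x hx
    rw [insideUntil_zero_of_ne (by rintro rfl; simp at hx), measureReal_empty]
  | succ n ih =>
    intro x hx
    by_cases hxL : x ∈ Set.Ioo 0 (L : ℤ)
    · rw [h.measureReal_insideUntil_succ n hxL, ih _ (by push_cast at hx; omega),
        ih _ (by push_cast at hx; omega)]
      ring
    · rw [insideUntil_eq_empty hxL, measureReal_empty]

lemma measureReal_insideUntil (h : IsBernoulliSteps P p ξ) (hp0 : 0 < p) (hp1 : p < 1)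
    (hs0 : 0 < s0) (hs0L : s0 < L) :
    ∀ (n : ℕ) (u : ℤ), 0 ≤ s0 + 2 * u - n → s0 + 2 * u - n ≤ L →
      P.real (insideUntil L s0 ξ n (s0 + 2 * u - n)) =
        p ^ u * (1 - p) ^ ((n : ℤ) - u) * imageSum L s0 n u := by
  have hL : 0 < L := by omega
  have hbdry : ∀ (n : ℕ) (u : ℤ), s0 + 2 * u - n = 0 ∨ s0 + 2 * u - n = L →
      P.real (insideUntil L s0 ξ n (s0 + 2 * u - n)) =
        p ^ u * (1 - p) ^ ((n : ℤ) - u) * imageSum L s0 n u := by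
    intro n u hx
    rw [insideUntil_eq_empty (by simp only [Set.mem_Ioo]; omega), measureReal_empty]
    rcases hx with hx | hx
    · rw [imageSum_eq_zero hL 0 (by linarith), mul_zero]
    · rw [imageSum_eq_zero hL (-1) (by linarith), mul_zero]
  intro n
  induction n with
  | zero =>
    intro u h0 hL'
    by_cases hx : s0 + 2 * u - (0 : ℕ) = 0 ∨ s0 + 2 * u - (0 : ℕ) = L
    · exact hbdry 0 u hx
    rw [imageSum_zero hs0 hs0L (by omega) (by omega)]
    by_cases hu : u = 0
    · subst hu
      simp [insideUntil_zero_self hs0 hs0L]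
    · rw [insideUntil_zero_of_ne (by omega), if_neg hu, measureReal_empty, mul_zero]
  | succ n ih =>
    intro u h0 hL'
    by_cases hx : s0 + 2 * u - (n + 1 : ℕ) = 0 ∨ s0 + 2 * u - (n + 1 : ℕ) = L
    · exact hbdry (n + 1) u hx
    have hq : 0 < 1 - p := by linarith
    rw [h.measureReal_insideUntil_succ n (by simp only [Set.mem_Ioo]; omega),
      h.measureReal_up hp0.le, h.measureReal_down hp1.le,
      show s0 + 2 * u - (n + 1 : ℕ) - 1 = s0 + 2 * (u - 1) - n by push_cast; ring,
      show s0 + 2 * u - (n + 1 : ℕ) + 1 = s0 + 2 * u - n by push_cast; ring,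
      ih (u - 1) (by omega) (by omega), ih u (by omega) (by omega), imageSum_succ hL,
      show (n : ℤ) - (u - 1) = ((n + 1 : ℕ) : ℤ) - u by push_cast; ring,
      show ((n + 1 : ℕ) : ℤ) - u = (n - u) + 1 by push_cast; ring,
      zpow_add_one₀ hq.ne', zpow_sub_one₀ hp0.ne']
    field_simp

lemma measureReal_firstExit_succ (h : IsBernoulliSteps P p ξ) (hs0 : 0 < s0) (hs0L : s0 < L)
    (n : ℕ) {b c : ℤ} (hc : c = 1 ∨ c = -1) (hbc : b + c ∉ Set.Ioo 0 (L : ℤ)) :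
    P.real (firstExit L s0 ξ (n + 1) b) =
      P.real (insideUntil L s0 ξ n (b - c)) * P.real {ω | ξ n ω = c} := by
  rw [← h.measureReal_inter_step (measurableSet_insideUntil_pastSteps n _)]
  exact measureReal_congr <| Filter.eventuallyEq_set.2 <|
    h.ae_step.mono fun ω hω => mem_firstExit_succ_iff hs0 hs0L hc hbc hω

lemma measureReal_firstExit (h : IsBernoulliSteps P p ξ) (hp0 : 0 < p) (hp1 : p < 1)
    (hs0 : 0 < s0) (hs0L : s0 < L) {s : ℤ} (hs : s = 0 ∨ s = L) (t : ℕ) :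
    P.real (firstExit L s0 ξ t s) =
      if 1 ≤ t ∧ 2 ∣ s - s0 + t then
        (1 - p) ^ ((t : ℤ) - (s - s0 + t) / 2) * p ^ ((s - s0 + t) / 2) *
          imageSum L s0 (t - 1) (if s = 0 then (s - s0 + t) / 2 else (s - s0 + t) / 2 - 1)
      else 0 := by
  obtain _ | n := t
  · rw [firstExit_zero_of_ne (by omega), measureReal_empty, if_neg (by omega)]
  rcases hs with rfl | rfl
  · rw [h.measureReal_firstExit_succ hs0 hs0L n (c := -1) (Or.inr rfl) (by simp),
      h.measureReal_down hp1.le]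
    by_cases hpar : 2 ∣ 0 - s0 + ((n + 1 : ℕ) : ℤ)
    · obtain ⟨r, hr⟩ := hpar
      rw [if_pos ⟨by omega, ⟨r, hr⟩⟩, show (0 - s0 + ((n + 1 : ℕ) : ℤ)) / 2 = r by omega,
        if_pos rfl, show (0 : ℤ) - -1 = s0 + 2 * r - n by push_cast at hr; omega,
        h.measureReal_insideUntil hp0 hp1 hs0 hs0L n r (by omega) (by omega),
        Nat.add_sub_cancel, show ((n + 1 : ℕ) : ℤ) - r = (n - r) + 1 by push_cast; ring,
        zpow_add_one₀ (by linarith)]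
      ring
    · rw [if_neg (by tauto), h.measureReal_insideUntil_of_not_dvd n _ (by omega), zero_mul]
  · rw [h.measureReal_firstExit_succ hs0 hs0L n (c := 1) (Or.inl rfl) (by simp),
      h.measureReal_up hp0.le]
    by_cases hpar : 2 ∣ (L : ℤ) - s0 + ((n + 1 : ℕ) : ℤ)
    · obtain ⟨r, hr⟩ := hpar
      rw [if_pos ⟨by omega, ⟨r, hr⟩⟩, show ((L : ℤ) - s0 + ((n + 1 : ℕ) : ℤ)) / 2 = r by omega,
        if_neg (by omega), show (L : ℤ) - 1 = s0 + 2 * (r - 1) - n by push_cast at hr; omega,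
        h.measureReal_insideUntil hp0 hp1 hs0 hs0L n (r - 1) (by omega) (by omega),
        Nat.add_sub_cancel, show ((n + 1 : ℕ) : ℤ) - r = n - (r - 1) by push_cast; ring,
        zpow_sub_one₀ hp0.ne']
      field_simp
    · rw [if_neg (by tauto), h.measureReal_insideUntil_of_not_dvd n _ (by omega), zero_mul]

lemma measureReal_iUnion_firstExit_and (h : IsBernoulliSteps P p ξ) {s : ℤ}
    (hs : s = 0 ∨ s = L) (c : ℕ → Prop) :
    P.real (⋃ t, {ω | ω ∈ firstExit L s0 ξ t s ∧ c t}) =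
      ∑' t, if c t then P.real (firstExit L s0 ξ t s) else 0 := by
  rw [measureReal_iUnion_eq_tsum (f := fun t => {ω | ω ∈ firstExit L s0 ξ t s ∧ c t})
    (fun t t' htt' => (disjoint_firstExit hs hs (Or.inl htt')).mono (fun _ h => h.1)
      (fun _ h => h.1))
    (fun t => (h.measurableSet_firstExit t s).inter (.const _))]
  refine tsum_congr fun t => ?_
  split_ifs with hc <;> simp [hc]

end IsBernoulliSteps

theorem stmt_0_general {Ω : Type*} [MeasurableSpace Ω] (P : Measure Ω) [IsProbabilityMeasure P]
    (L : ℕ) (s0 : ℤ) (hs0 : 0 < s0) (hs0L : s0 < (L : ℤ))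
    (p : ℝ) (hp0 : 0 < p) (hp1 : p < 1)
    (lam0 lamL : ℝ)
    (ξ : ℕ → Ω → ℤ) (hmeas : ∀ i, Measurable (ξ i))
    (hindep : iIndepFun ξ P)
    (hplus : ∀ i, P {ω | ξ i ω = 1} = ENNReal.ofReal p)
    (hminus : ∀ i, P {ω | ξ i ω = -1} = ENNReal.ofReal (1 - p))
    (X : ℕ → Ω → ℤ) (hX : ∀ k ω, X k ω = s0 + ∑ i ∈ Finset.range k, ξ i ω)
    (g : ℝ) :
    P {ω | ∃ t : ℕ, 0 < t ∧ (∀ k < t, X k ω ≠ 0 ∧ X k ω ≠ (L : ℤ)) ∧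
        (X t ω = 0 ∨ X t ω = (L : ℤ)) ∧
        g = (if X t ω = 0 then lam0 else lamL) - t}
      = ENNReal.ofReal (∑ s ∈ ({0, (L : ℤ)} : Finset ℤ), ∑' t : ℕ,
          if 1 ≤ t ∧ (if s = 0 then lam0 else lamL) - g = (t : ℝ) ∧ (2 : ℤ) ∣ (s - s0 + t) then
            (1 - p) ^ ((t : ℤ) - (s - s0 + t) / 2) * p ^ ((s - s0 + t) / 2) *
              ∑' k : ℤ,
                ((Cb (t - 1) ((if s = 0 then (s - s0 + t) / 2 else (s - s0 + t) / 2 - 1)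
                    + k * L) : ℝ)
                - (Cb (t - 1) ((if s = 0 then (s - s0 + t) / 2 else (s - s0 + t) / 2 - 1)
                    + s0 + k * L) : ℝ))
          else 0) := by
  obtain rfl : X = walk s0 ξ := funext fun k => funext (hX k)
  have h : IsBernoulliSteps P p ξ := ⟨hmeas, hindep, hplus, hminus⟩
  have hbd : ∀ s ∈ ({0, (L : ℤ)} : Finset ℤ), s = 0 ∨ s = L := by simp
  have hdisj : Set.PairwiseDisjoint (↑({0, (L : ℤ)} : Finset ℤ)) fun s =>
      ⋃ t : ℕ, {ω | ω ∈ firstExit L s0 ξ t s ∧ (if s = 0 then lam0 else lamL) - g = t} :=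
    fun s hs s' hs' hss' => Set.disjoint_iUnion_left.2 fun t => Set.disjoint_iUnion_right.2
      fun t' => (disjoint_firstExit (hbd s hs) (hbd s' hs') (Or.inr hss')).mono
        (fun _ h => h.1) (fun _ h => h.1)
  rw [setOf_exists_firstExit hs0 hs0L, ← ofReal_measureReal (measure_ne_top P _),
    measureReal_biUnion_finset hdisj fun s _ => MeasurableSet.iUnion fun t =>
      (h.measurableSet_firstExit t s).inter (.const _)]
  congr 1
  refine Finset.sum_congr rfl fun s hs => ?_
  rw [h.measureReal_iUnion_firstExit_and (hbd s hs)]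
  refine tsum_congr fun t => ?_
  rw [h.measureReal_firstExit hp0 hp1 hs0 hs0L (hbd s hs) t]
  by_cases hg : (if s = 0 then lam0 else lamL) - g = t
  · simp only [hg, true_and, if_true, imageSum]
  · simp only [hg, and_false, false_and, if_false]

/-- For the ±1 random walk on `{0,…,L}` started at `s0`, absorbed on
first reaching `0` or `L` at time `T`, with episodic return `G = λ_{X_T} - T`, the
probability `P(G = g)` is given by the method-of-images formula. -/
theorem stmt_0 {Ω : Type*} [MeasurableSpace Ω] (P : Measure Ω) [IsProbabilityMeasure P]
    (L : ℕ) (hL : 2 ≤ L) (s0 : ℤ) (hs0 : 0 < s0) (hs0L : s0 < (L : ℤ))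
    (p : ℝ) (hp0 : 0 < p) (hp1 : p < 1)
    (lam0 lamL : ℝ)
    (ξ : ℕ → Ω → ℤ) (hmeas : ∀ i, Measurable (ξ i))
    (hindep : iIndepFun ξ P)
    (hplus : ∀ i, P {ω | ξ i ω = 1} = ENNReal.ofReal p)
    (hminus : ∀ i, P {ω | ξ i ω = -1} = ENNReal.ofReal (1 - p))
    (X : ℕ → Ω → ℤ) (hX : ∀ k ω, X k ω = s0 + ∑ i ∈ Finset.range k, ξ i ω)
    (g : ℝ) :
    P {ω | ∃ t : ℕ, 0 < t ∧ (∀ k < t, X k ω ≠ 0 ∧ X k ω ≠ (L : ℤ)) ∧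
        (X t ω = 0 ∨ X t ω = (L : ℤ)) ∧
        g = (if X t ω = 0 then lam0 else lamL) - t}
      = ENNReal.ofReal (∑ s ∈ ({0, (L : ℤ)} : Finset ℤ), ∑' t : ℕ,
          if 1 ≤ t ∧ (if s = 0 then lam0 else lamL) - g = (t : ℝ) ∧ (2 : ℤ) ∣ (s - s0 + t) then
            (1 - p) ^ ((t : ℤ) - (s - s0 + t) / 2) * p ^ ((s - s0 + t) / 2) *
              ∑' k : ℤ,
                ((Cb (t - 1) ((if s = 0 then (s - s0 + t) / 2 else (s - s0 + t) / 2 - 1)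
                    + k * L) : ℝ)
                - (Cb (t - 1) ((if s = 0 then (s - s0 + t) / 2 else (s - s0 + t) / 2 - 1)
                    + s0 + k * L) : ℝ))
          else 0) :=
  stmt_0_general P L s0 hs0 hs0L p hp0 hp1 lam0 lamL ξ hmeas hindep hplus hminus X hX g
end

section
/- Let L ≥ 2 be an integer, let s0 be an integer with 0 < s0 < L, let t′ ≥ 1 and r′ ∈ ℤ. Then Σ_{k∈ℤ} [C(t′, r′+kL) − C(t′, r′+s0+kL)] = (4/L) Σ_{k=1}^{⌊(L−1)/2⌋} 2^{t′} cos^{t′}(πk/L) · sin(πk s0/L) · sin(πk(2r′+s0−t′)/L). -/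
open Finset

def binomialSectionSum (t L : ℕ) (r : ℤ) : ℕ :=
  ∑ n ∈ (range (t + 1)).filter (fun n : ℕ => (L : ℤ) ∣ n - r), t.choose n

lemma Cb_natCast (t n : ℕ) : Cb t n = t.choose n := by
  unfold Cb
  split_ifs with h
  · simp
  · rw [Nat.choose_eq_zero_of_lt (by omega), Nat.cast_zero]

lemma hasSum_Cb_add_mul (t L : ℕ) (hL : L ≠ 0) (r : ℤ) :
    HasSum (fun k : ℤ => (Cb t (r + k * L) : ℝ)) (binomialSectionSum t L r) := by
  set f : ℤ → ℝ := fun n => if (L : ℤ) ∣ n - r then (Cb t n : ℝ) else 0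
  have hinj : Function.Injective (fun k : ℤ => r + k * L) := fun a b h => by simpa [hL] using h
  have hcomp : (f ∘ fun k : ℤ => r + k * L) = fun k => (Cb t (r + k * L) : ℝ) := by
    funext k
    simp [f]
  rw [← hcomp, hinj.hasSum_iff]
  · have hsupp : ∀ n ∉ (range (t + 1)).map Nat.castEmbedding, f n = 0 := by
      intro n hn
      simp only [mem_map, mem_range, Nat.castEmbedding_apply, not_exists, not_and] at hn
      have hout : ¬(0 ≤ n ∧ n ≤ t) := fun ⟨h0, ht⟩ => hn n.toNat (by omega) (by omega)
      simp [f, Cb, hout]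
    have hval : ((binomialSectionSum t L r : ℕ) : ℝ)
        = ∑ n ∈ (range (t + 1)).map Nat.castEmbedding, f n := by
      simp [binomialSectionSum, sum_filter, f, Cb_natCast]
    rw [hval]
    exact hasSum_sum_of_ne_finset_zero hsupp
  · intro n hn
    simp only [f, ite_eq_right_iff]
    rintro ⟨k, hk⟩
    exact absurd ⟨k, by linarith⟩ hn

namespace IsPrimitiveRoot

variable {K : Type*} [Field K] {ζ : K} {L : ℕ}

lemma sum_pow_zpow_eq_ite_dvd (h : IsPrimitiveRoot ζ L) (m : ℤ) :
    ∑ j ∈ range L, (ζ ^ j) ^ m = if (L : ℤ) ∣ m then (L : K) else 0 := by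
  have hcomm (j : ℕ) : (ζ ^ j) ^ m = (ζ ^ m) ^ j := by
    rw [← zpow_natCast, ← zpow_mul, ← zpow_natCast, ← zpow_mul, mul_comm]
  simp_rw [hcomm]
  split_ifs with hdvd
  · simp [(h.zpow_eq_one_iff_dvd m).2 hdvd]
  · rw [geom_sum_eq (mt (h.zpow_eq_one_iff_dvd m).1 hdvd), ← zpow_natCast, ← zpow_mul, mul_comm,
      zpow_mul, h.zpow_eq_one, one_zpow, sub_self, zero_div]

lemma natCast_mul_binomialSectionSum (h : IsPrimitiveRoot ζ L) (t : ℕ) (r : ℤ) :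
    (L : K) * binomialSectionSum t L r = ∑ j ∈ range L, (ζ ^ j) ^ (-r) * (1 + ζ ^ j) ^ t := by
  have hexpand : ∀ j ∈ range L, (ζ ^ j) ^ (-r) * (1 + ζ ^ j) ^ t
      = ∑ n ∈ range (t + 1), (t.choose n : K) * (ζ ^ j) ^ ((n : ℤ) - r) := by
    intro j hj
    have hζ : ζ ^ j ≠ 0 := pow_ne_zero _ (h.ne_zero (by rw [mem_range] at hj; omega))
    rw [add_comm, add_pow, mul_sum]
    refine sum_congr rfl fun n _ => ?_
    rw [sub_eq_add_neg, zpow_add₀ hζ, zpow_natCast, one_pow]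
    ring
  rw [sum_congr rfl hexpand, sum_comm]
  simp_rw [← mul_sum, h.sum_pow_zpow_eq_ite_dvd]
  simp [binomialSectionSum, sum_filter, mul_sum, mul_comm]

end IsPrimitiveRoot

noncomputable def sectionKernel (t : ℕ) (r s : ℤ) (θ : ℝ) : ℝ :=
  Real.cos θ ^ t * Real.sin (s * θ) * Real.sin ((2 * r + s - t : ℤ) * θ)

section Trigonometry

open Complex

lemma one_add_exp_two_mul_I (θ : ℝ) :
    1 + exp (2 * θ * I) = 2 * Real.cos θ * exp (θ * I) := by
  rw [ofReal_cos, cos, show 2 * (θ : ℂ) * I = θ * I + θ * I by ring, exp_add, neg_mul,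
    exp_neg]
  field_simp
  ring

lemma exp_zpow_sub_exp_zpow (θ : ℝ) (a b : ℤ) :
    exp (2 * θ * I) ^ a - exp (2 * θ * I) ^ b
      = 2 * Real.sin ((a - b) * θ) * I * exp ((a + b) * θ * I) := by
  rw [← exp_int_mul, ← exp_int_mul, ofReal_sin, sin]
  push_cast
  rw [show (a : ℂ) * (2 * θ * I) = (a + b) * θ * I + (a - b) * θ * I by ring,
    show (b : ℂ) * (2 * θ * I) = (a + b) * θ * I + -((a - b) * θ * I) by ring,
    exp_add, exp_add, neg_mul]
  linear_combination
    exp ((a + b) * θ * I) * (exp ((a - b) * θ * I) - exp (-((a - b) * θ * I))) * I_sq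

lemma re_I_mul_exp_neg (x : ℝ) : (I * exp (-x * I)).re = Real.sin x := by
  rw [← ofReal_neg, I_mul_re, exp_ofReal_mul_I_im, Real.sin_neg, neg_neg]

lemma re_exp_zpow_sub_mul_one_add_pow (θ : ℝ) (r s : ℤ) (t : ℕ) :
    ((exp (2 * θ * I) ^ (-r) - exp (2 * θ * I) ^ (-(r + s))) * (1 + exp (2 * θ * I)) ^ t).re
      = 2 ^ (t + 1) * sectionKernel t r s θ := by
  have hprod : (exp (2 * θ * I) ^ (-r) - exp (2 * θ * I) ^ (-(r + s))) * (1 + exp (2 * θ * I)) ^ t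
      = (2 ^ (t + 1) * Real.cos θ ^ t * Real.sin (s * θ) : ℝ)
          * (I * exp (-((2 * r + s - t : ℤ) * θ : ℝ) * I)) := by
    rw [exp_zpow_sub_exp_zpow, one_add_exp_two_mul_I, mul_pow, ← exp_nat_mul]
    calc _ = (2 ^ (t + 1) * Real.cos θ ^ t * Real.sin ((-r - -(r + s) : ℤ) * θ) : ℝ) * I
          * (exp ((-r + -(r + s) : ℤ) * θ * I) * exp (t * (θ * I))) := by push_cast; ring
      _ = _ := by
        rw [← exp_add]
        push_cast
        ring_nf
  rw [hprod, re_ofReal_mul, re_I_mul_exp_neg, sectionKernel]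
  ring

end Trigonometry

lemma natCast_mul_sub_binomialSectionSum (t L : ℕ) (hL : L ≠ 0) (r s : ℤ) :
    (L : ℝ) * ((binomialSectionSum t L r : ℝ) - binomialSectionSum t L (r + s))
      = 2 ^ (t + 1) * ∑ j ∈ range L, sectionKernel t r s (Real.pi * j / L) := by
  have hζ := Complex.isPrimitiveRoot_exp L hL
  have hpow (j : ℕ) : Complex.exp (2 * Real.pi * Complex.I / L) ^ j
      = Complex.exp (2 * (Real.pi * j / L : ℝ) * Complex.I) := by
    rw [← Complex.exp_nat_mul]
    push_cast
    ring_nf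
  calc (L : ℝ) * ((binomialSectionSum t L r : ℝ) - binomialSectionSum t L (r + s))
      = ((L : ℂ) * binomialSectionSum t L r - (L : ℂ) * binomialSectionSum t L (r + s)).re := by
        simp [mul_sub]
    _ = _ := by
        rw [hζ.natCast_mul_binomialSectionSum, hζ.natCast_mul_binomialSectionSum,
          ← sum_sub_distrib, Complex.re_sum, mul_sum]
        simp_rw [← sub_mul, hpow, re_exp_zpow_sub_mul_one_add_pow]

open Real in
lemma sectionKernel_pi_sub (t : ℕ) (r s : ℤ) (θ : ℝ) :
    sectionKernel t r s (π - θ) = sectionKernel t r s θ := by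
  have hsign : (-1 : ℝ) ^ t * ((-1) ^ s * (-1) ^ (2 * r + s - t)) = 1 := by
    rw [← zpow_natCast, ← zpow_add₀ (by norm_num), ← zpow_add₀ (by norm_num),
      show (t : ℤ) + (s + (2 * r + s - t)) = 2 * (r + s) by ring, zpow_mul]
    norm_num
  rw [sectionKernel, sectionKernel, cos_pi_sub, mul_sub, mul_sub, sin_int_mul_pi_sub,
    sin_int_mul_pi_sub, neg_pow]
  linear_combination (cos θ ^ t * sin (s * θ) * sin ((2 * r + s - t : ℤ) * θ)) * hsign

lemma sectionKernel_pi_div_two {t : ℕ} (ht : t ≠ 0) (r s : ℤ) :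
    sectionKernel t r s (Real.pi / 2) = 0 := by
  simp [sectionKernel, Real.cos_pi_div_two, zero_pow ht]

lemma sum_range_eq_two_nsmul_sum_Icc_of_symm {M : Type*} [AddCommMonoid M] (L : ℕ) (g : ℕ → M)
    (h0 : g 0 = 0) (hsymm : ∀ j ∈ Ioo 0 L, g (L - j) = g j) (hmid : Even L → g (L / 2) = 0) :
    ∑ j ∈ range L, g j = 2 • ∑ j ∈ Icc 1 ((L - 1) / 2), g j := by
  rcases L.eq_zero_or_pos with rfl | hL
  · simp
  set m := (L - 1) / 2
  have hlow : ∑ j ∈ range L, g j = ∑ j ∈ Ico 1 L, g j := by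
    rw [range_eq_Ico, sum_eq_sum_Ico_succ_bot hL, h0, zero_add]
  have hhigh : ∑ j ∈ Ico (m + 1) L, g j = ∑ j ∈ Ico 1 (m + 1), g j := by
    calc ∑ j ∈ Ico (m + 1) L, g j = ∑ j ∈ Ico (m + 1) L, g (L - j) :=
          sum_congr rfl fun j hj => (hsymm j (by simp only [mem_Ico, mem_Ioo] at hj ⊢; omega)).symm
      _ = ∑ j ∈ Ico 1 (L - m), g j := by
          rw [sum_Ico_reflect _ _ (Nat.le_succ L), Nat.add_sub_cancel_left, Nat.add_sub_add_right]
      _ = ∑ j ∈ Ico 1 (m + 1), g j := by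
          rcases Nat.even_or_odd L with heven | hodd
          · have hm : L / 2 = m + 1 := by obtain ⟨k, hk⟩ := heven; omega
            rw [show L - m = m + 1 + 1 by omega, sum_Ico_succ_top (by omega), ← hm, hmid heven,
              add_zero]
          · rw [show L - m = m + 1 by obtain ⟨k, hk⟩ := hodd; omega]
  rw [hlow, ← sum_Ico_consecutive _ (by omega : 1 ≤ m + 1) (by omega : m + 1 ≤ L), hhigh,
    two_nsmul, Ico_add_one_right_eq_Icc]

lemma sum_range_sectionKernel {t : ℕ} (ht : t ≠ 0) (L : ℕ) (r s : ℤ) :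
    ∑ j ∈ range L, sectionKernel t r s (Real.pi * j / L)
      = 2 • ∑ j ∈ Icc 1 ((L - 1) / 2), sectionKernel t r s (Real.pi * j / L) := by
  refine sum_range_eq_two_nsmul_sum_Icc_of_symm L _ (by simp [sectionKernel])
    (fun j hj => ?_) (fun heven => ?_)
  · rw [mem_Ioo] at hj
    have hL : (L : ℝ) ≠ 0 := by norm_cast; omega
    rw [Nat.cast_sub hj.2.le, show Real.pi * (L - j : ℝ) / L = Real.pi - Real.pi * j / L by
      field_simp, sectionKernel_pi_sub]
  · obtain ⟨l, rfl⟩ := heven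
    rcases eq_or_ne l 0 with rfl | hl
    · simp [sectionKernel]
    rw [← two_mul, Nat.mul_div_cancel_left l two_pos, Nat.cast_mul, Nat.cast_two,
      show Real.pi * l / (2 * l) = Real.pi / 2 by field_simp, sectionKernel_pi_div_two ht]

theorem stmt_6_general (L : ℕ) (hL : 2 ≤ L) (s0 : ℤ)
    (t' : ℕ) (ht' : 1 ≤ t') (r' : ℤ) :
    ∑' k : ℤ, ((Cb t' (r' + k * L) : ℝ) - (Cb t' (r' + s0 + k * L) : ℝ))
      = (4 / (L : ℝ)) * ∑ k ∈ Finset.Icc 1 ((L - 1) / 2),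
          2 ^ t' * Real.cos (Real.pi * k / L) ^ t' *
            Real.sin (Real.pi * k * s0 / L) *
            Real.sin (Real.pi * k * ((2 * r' + s0 - t' : ℤ) : ℝ) / L) := by
  have hL0 : L ≠ 0 := by omega
  have hLR : (L : ℝ) ≠ 0 := Nat.cast_ne_zero.2 hL0
  have key := natCast_mul_sub_binomialSectionSum t' L hL0 r' s0
  rw [sum_range_sectionKernel (by omega), two_nsmul] at key
  have hsummand (k : ℕ) : 2 ^ t' * Real.cos (Real.pi * k / L) ^ t' *
      Real.sin (Real.pi * k * s0 / L) * Real.sin (Real.pi * k * ((2 * r' + s0 - t' : ℤ) : ℝ) / L)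
        = 2 ^ t' * sectionKernel t' r' s0 (Real.pi * k / L) := by
    rw [sectionKernel]
    ring_nf
  rw [((hasSum_Cb_add_mul t' L hL0 r').sub (hasSum_Cb_add_mul t' L hL0 (r' + s0))).tsum_eq,
    sum_congr rfl fun k _ => hsummand k, ← mul_sum, ← mul_right_inj' hLR, key, ← mul_assoc,
    mul_div_cancel₀ _ hLR]
  ring

/-- Real trigonometric closed form of the method-of-images sum. -/
theorem stmt_6 (L : ℕ) (hL : 2 ≤ L) (s0 : ℤ) (hs0 : 0 < s0) (hs0L : s0 < (L : ℤ))
    (t' : ℕ) (ht' : 1 ≤ t') (r' : ℤ) :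
    ∑' k : ℤ, ((Cb t' (r' + k * L) : ℝ) - (Cb t' (r' + s0 + k * L) : ℝ))
      = (4 / (L : ℝ)) * ∑ k ∈ Finset.Icc 1 ((L - 1) / 2),
          2 ^ t' * Real.cos (Real.pi * k / L) ^ t' *
            Real.sin (Real.pi * k * s0 / L) *
            Real.sin (Real.pi * k * ((2 * r' + s0 - t' : ℤ) : ℝ) / L) :=
  stmt_6_general L hL s0 t' ht' r'
end

section
/- Let N ≥ 1 and let α, γ be reals with α > 0, γ > 0 and αγ ≤ 1/4, and set x = 1/(2√(αγ)). Let J be the N×N real tridiagonal Toeplitz matrix (0-indexed) with J_{ii} = 1, J_{i,i+1} = −α, J_{i+1,i} = −γ, and all other entries 0, and let U_k denote the degree-k Chebyshev polynomial of the second kind. Then J is invertible, and for all 0 ≤ i ≤ j ≤ N−1, (J^{-1})_{ij} = α^{j−i} (αγ)^{(i−j−1)/2} · U_i(x) U_{N−j−1}(x) / U_N(x), while for 0 ≤ j < i ≤ N−1, (J^{-1})_{ij} = γ^{i−j} (αγ)^{(j−i−1)/2} · U_j(x) U_{N−i−1}(x) / U_N(x). -/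
/-- The Chebyshev polynomial of the second kind of (integer) degree `k`, evaluated at
`x : ℝ`. -/
noncomputable def chebU (k : ℤ) (x : ℝ) : ℝ := (Polynomial.Chebyshev.U ℝ k).eval x

noncomputable def Vseq (c : ℝ) : ℕ → ℝ
  | 0 => 1
  | 1 => 1
  | (n+2) => Vseq c (n+1) - c * Vseq c n

lemma Vseq_zero (c : ℝ) : Vseq c 0 = 1 := rfl
lemma Vseq_one (c : ℝ) : Vseq c 1 = 1 := rfl
lemma Vseq_rec (c : ℝ) (n : ℕ) : Vseq c (n+2) = Vseq c (n+1) - c * Vseq c n := rfl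

lemma Vseq_pos_aux (c : ℝ) (hc0 : 0 ≤ c) (hc : c ≤ 1/4) :
    ∀ n, 0 < Vseq c (n+1) ∧ Vseq c n ≤ 2 * Vseq c (n+1) := by
  intro n
  induction n with
  | zero => norm_num [Vseq_zero, Vseq_one]
  | succ m ih =>
    obtain ⟨h1, h2⟩ := ih
    have hrec := Vseq_rec c m
    constructor
    · nlinarith
    · nlinarith

lemma Vseq_pos (c : ℝ) (hc0 : 0 ≤ c) (hc : c ≤ 1/4) (n : ℕ) : 0 < Vseq c n := by
  cases n with
  | zero => norm_num [Vseq_zero]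
  | succ m => exact (Vseq_pos_aux c hc0 hc m).1

lemma Vseq_add (c : ℝ) (m : ℕ) : ∀ n, Vseq c (m + n + 2) =
    Vseq c (m+1) * Vseq c (n+1) - c * Vseq c m * Vseq c n := by
  have key : ∀ n, (Vseq c (m + n + 2) =
      Vseq c (m+1) * Vseq c (n+1) - c * Vseq c m * Vseq c n) ∧
      (Vseq c (m + (n+1) + 2) =
      Vseq c (m+1) * Vseq c (n+2) - c * Vseq c m * Vseq c (n+1)) := by
    intro n
    induction n with
    | zero =>
      constructor
      · simp [Vseq_rec, Vseq_zero, Vseq_one]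
      · simp [Vseq_rec, Vseq_zero, Vseq_one]
        ring
    | succ k ih =>
      obtain ⟨ihk, ihk1⟩ := ih
      refine ⟨ihk1, ?_⟩
      have e1 : m + (k + 2) + 2 = (m + k + 2) + 2 := by omega
      rw [e1, Vseq_rec]
      have e2 : m + k + 2 + 1 = m + (k+1) + 2 := by omega
      rw [e2, ihk1]
      have e3 : m + k + 2 = m + k + 2 := rfl
      rw [ihk]
      have := Vseq_rec c (k+1)
      rw [show k+1+2 = k+3 from rfl] at this
      rw [show k+3 = k+1+2 from rfl, Vseq_rec c (k+1), Vseq_rec c k]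
      ring
  exact fun n => (key n).1

lemma chebU_zero (x : ℝ) : chebU 0 x = 1 := by simp [chebU]

lemma chebU_one (x : ℝ) : chebU 1 x = 2 * x := by
  simp [chebU, Polynomial.Chebyshev.U_one]

lemma chebU_rec (x : ℝ) (n : ℤ) : chebU (n+2) x = 2*x*chebU (n+1) x - chebU n x := by
  simp [chebU, Polynomial.Chebyshev.U_add_two]

lemma Vseq_cheb (s x : ℝ) (hx : 2*s*x = 1) :
    ∀ n : ℕ, Vseq (s*s) n = s^n * chebU n x := by
  have key : ∀ n : ℕ, Vseq (s*s) n = s^n * chebU n x ∧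
      Vseq (s*s) (n+1) = s^(n+1) * chebU (n+1) x := by
    intro n
    induction n with
    | zero =>
      constructor
      · simp [Vseq_zero, chebU_zero]
      · rw [Vseq_one]
        push_cast
        rw [chebU_one]
        linarith [hx]
    | succ k ih =>
      obtain ⟨h0, h1⟩ := ih
      refine ⟨h1, ?_⟩
      rw [Vseq_rec, h0, h1]
      have e : ((k:ℤ)+1+1) = (k:ℤ)+2 := by ring
      push_cast
      rw [e, chebU_rec]
      linear_combination (-(s^(k+1)) * chebU ((k:ℤ)+1) x) * hx
  exact fun n => (key n).1

noncomputable def bmat (N : ℕ) (α γ : ℝ) (p q : ℕ) : ℝ :=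
  if p ≤ q then α^(q-p) * Vseq (α*γ) p * Vseq (α*γ) (N-1-q) / Vseq (α*γ) N
  else γ^(p-q) * Vseq (α*γ) q * Vseq (α*γ) (N-1-p) / Vseq (α*γ) N

lemma bmat_key (N : ℕ) (hN : 1 ≤ N) (α γ : ℝ) (hα : 0 < α) (hγ : 0 < γ)
    (hαγ : α*γ ≤ 1/4) (p q : ℕ) (hp : p < N) (hq : q < N) :
    bmat N α γ p q + (if p+1 < N then -α * bmat N α γ (p+1) q else 0)
      + (if 1 ≤ p then -γ * bmat N α γ (p-1) q else 0) = if p = q then 1 else 0 := by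
  have hc0 : (0:ℝ) ≤ α*γ := le_of_lt (mul_pos hα hγ)
  have hV : ∀ n, 0 < Vseq (α*γ) n := Vseq_pos (α*γ) hc0 hαγ
  have hVN : Vseq (α*γ) N ≠ 0 := (hV N).ne'
  rcases lt_trichotomy p q with h | rfl | h
  · -- p < q
    rw [if_pos (by omega : p + 1 < N), if_neg (by omega : ¬ p = q)]
    rcases Nat.eq_zero_or_pos p with rfl | hp1
    · rw [if_neg (by omega : ¬ 1 ≤ 0), add_zero]
      obtain ⟨d, rfl⟩ : ∃ d, q = d + 1 := ⟨q-1, by omega⟩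
      simp only [bmat, if_pos (by omega : 0 ≤ d+1), if_pos (by omega : 0+1 ≤ d+1)]
      rw [show d+1-0 = d+1 by omega, show d+1-(0+1) = d by omega, Vseq_zero, Vseq_one]
      field_simp
      ring
    · obtain ⟨p', rfl⟩ : ∃ p', p = p'+1 := ⟨p-1, by omega⟩
      obtain ⟨d, rfl⟩ : ∃ d, q = p' + 2 + d := ⟨q-p'-2, by omega⟩
      rw [if_pos (by omega : 1 ≤ p'+1)]
      simp only [bmat, if_pos (by omega : p'+1 ≤ p'+2+d), if_pos (by omega : p'+1+1 ≤ p'+2+d),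
        if_pos (by omega : p'+1-1 ≤ p'+2+d)]
      rw [show p'+1-1 = p' by omega, show p'+2+d-(p'+1) = d+1 by omega,
        show p'+2+d-(p'+1+1) = d by omega, show p'+2+d-p' = d+2 by omega,
        show p'+1+1 = p'+2 by omega, Vseq_rec]
      field_simp
      ring
  · -- p = q
    rw [if_pos rfl]
    rcases Nat.eq_zero_or_pos p with rfl | hp1
    · rw [if_neg (by omega : ¬ 1 ≤ 0), add_zero]
      rcases eq_or_lt_of_le hN with hN1 | hN2
      · rw [if_neg (by omega : ¬ 0 + 1 < N)]
        simp only [bmat, if_pos (le_refl 0), ← hN1]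
        norm_num [Vseq_zero, Vseq_one]
      · obtain ⟨m, rfl⟩ : ∃ m, N = m + 2 := ⟨N-2, by omega⟩
        rw [if_pos (by omega : 0+1 < m+2)]
        simp only [bmat, if_pos (le_refl 0), if_neg (by omega : ¬ 0+1 ≤ 0)]
        rw [show m+2-1-0 = m+1 by omega, show 0+1-0 = 1 by omega,
          show m+2-1-(0+1) = m by omega, show (0:ℕ)-0 = 0 by omega, Vseq_zero]
        field_simp
        linear_combination (norm := ring_nf) -Vseq_rec (α*γ) m
    · obtain ⟨p', rfl⟩ : ∃ p', p = p'+1 := ⟨p-1, by omega⟩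
      rw [if_pos (by omega : 1 ≤ p'+1)]
      rcases eq_or_lt_of_le (show p'+1+1 ≤ N by omega) with hN1 | hN2
      · subst hN1
        rw [if_neg (by omega : ¬ p'+1+1 < p'+1+1), add_zero]
        simp only [bmat, if_pos (le_refl (p'+1)), if_pos (by omega : p'+1-1 ≤ p'+1)]
        rw [show p'+1-(p'+1) = 0 by omega, show p'+1-1 = p' by omega,
          show p'+1-p' = 1 by omega, show p'+1+1-1-(p'+1) = 0 by omega, Vseq_zero]
        field_simp
        linear_combination (norm := ring_nf) -Vseq_rec (α*γ) p'
      · obtain ⟨n, rfl⟩ : ∃ n, N = p'+1+n+2 := ⟨N-p'-3, by omega⟩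
        rw [if_pos (by omega : p'+1+1 < p'+1+n+2)]
        simp only [bmat, if_pos (le_refl (p'+1)), if_neg (by omega : ¬ p'+1+1 ≤ p'+1),
          if_pos (by omega : p'+1-1 ≤ p'+1)]
        rw [show p'+1-(p'+1) = 0 by omega, show p'+1-1 = p' by omega,
          show p'+1-p' = 1 by omega, show p'+1+1-(p'+1) = 1 by omega,
          show p'+1+n+2-1-(p'+1) = n+1 by omega, show p'+1+n+2-1-(p'+1+1) = n by omega]
        field_simp
        linear_combination (norm := ring_nf) -Vseq_add (α*γ) (p'+1) n
          - Vseq (α*γ) (n+1) * Vseq_rec (α*γ) p'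
  · -- q < p
    rw [if_neg (by omega : ¬ p = q), if_pos (by omega : 1 ≤ p)]
    obtain ⟨d, rfl⟩ : ∃ d, p = q + 1 + d := ⟨p-q-1, by omega⟩
    have hb1 : bmat N α γ (q+1+d-1) q
        = γ^d * Vseq (α*γ) q * Vseq (α*γ) (N-1-(q+d)) / Vseq (α*γ) N := by
      rw [show q+1+d-1 = q+d by omega]
      rcases Nat.eq_zero_or_pos d with rfl | hd
      · simp only [bmat, if_pos (by omega : q+0 ≤ q)]
        rw [show q-(q+0) = 0 by omega, show q+0 = q by omega, pow_zero, pow_zero]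
      · simp only [bmat, if_neg (by omega : ¬ q+d ≤ q)]
        rw [show q+d-q = d by omega]
    rw [hb1, show N-1-(q+d) = N-(q+1+d) by omega]
    rcases eq_or_lt_of_le (show q+1+d+1 ≤ N by omega) with hN1 | hN2
    · rw [if_neg (by omega : ¬ q+1+d+1 < N), add_zero]
      simp only [bmat, if_neg (by omega : ¬ q+1+d ≤ q)]
      rw [show q+1+d-q = d+1 by omega, show N-1-(q+1+d) = 0 by omega,
        show N-(q+1+d) = 1 by omega, Vseq_zero, Vseq_one]
      field_simp
      ring
    · obtain ⟨m, rfl⟩ : ∃ m, N = q+1+d+2+m := ⟨N-q-d-3, by omega⟩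
      rw [if_pos (by omega : q+1+d+1 < q+1+d+2+m)]
      simp only [bmat, if_neg (by omega : ¬ q+1+d ≤ q), if_neg (by omega : ¬ q+1+d+1 ≤ q)]
      rw [show q+1+d-q = d+1 by omega, show q+1+d+1-q = d+2 by omega,
        show q+1+d+2+m-1-(q+1+d) = m+1 by omega, show q+1+d+2+m-1-(q+1+d+1) = m by omega,
        show q+1+d+2+m-(q+1+d) = m+2 by omega, Vseq_rec]
      field_simp
      ring

lemma chebU_ne (s x : ℝ) (hs : 0 < s) (h2sx : 2*s*x = 1) (c : ℝ) (hss : s*s = c)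
    (hc : c ≤ 1/4) (n : ℕ) : 0 < chebU n x := by
  have hV := Vseq_cheb s x h2sx n
  rw [hss] at hV
  have hpos : 0 < Vseq c n := Vseq_pos c (by nlinarith) hc n
  have hsn : 0 < s ^ n := pow_pos hs n
  nlinarith [hV]

lemma bmat_eq_upper (N : ℕ) (α γ s x : ℝ) (hα : 0 < α) (hγ : 0 < γ) (hs : 0 < s)
    (hss : s*s = α*γ) (h2sx : 2*s*x = 1) (hαγ : α*γ ≤ 1/4) (i j : ℕ) (hij : i ≤ j)
    (hj : j < N) :
    bmat N α γ i j = α ^ ((j:ℝ) - (i:ℝ)) * (α*γ) ^ ((((i:ℝ)) - (j:ℝ) - 1)/2) *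
      chebU i x * chebU ((N:ℤ) - j - 1) x / chebU N x := by
  obtain ⟨a, rfl⟩ : ∃ a, j = i + a := ⟨j - i, by omega⟩
  obtain ⟨m, rfl⟩ : ∃ m, N = i + a + 1 + m := ⟨N - (i+a) - 1, by omega⟩
  have hV : ∀ n : ℕ, Vseq (α*γ) n = s^n * chebU n x := by
    intro n; have := Vseq_cheb s x h2sx n; rwa [hss] at this
  have hUN : chebU (i+a+1+m : ℕ) x ≠ 0 := (chebU_ne s x hs h2sx _ hss hαγ _).ne'
  have hz : ((i+a+1+m : ℕ) : ℤ) - ((i+a : ℕ) : ℤ) - 1 = ((m : ℕ) : ℤ) := by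
    push_cast; ring
  have hs0 : s ≠ 0 := hs.ne'
  have hU : ∀ n : ℕ, chebU n x = Vseq (α*γ) n / s^n := by
    intro n; rw [hV n]; field_simp
  have hVN0 : Vseq (α*γ) (i+a+1+m) ≠ 0 :=
    (Vseq_pos (α*γ) (by nlinarith) hαγ _).ne'
  rw [bmat, if_pos (by omega : i ≤ i + a), show i + a - i = a by omega,
    show i+a+1+m-1-(i+a) = m by omega, hz, hU i, hU m, hU (i+a+1+m)]
  have e1 : α ^ (((i+a:ℕ):ℝ) - (i:ℝ)) = α ^ a := by
    rw [show ((i+a:ℕ):ℝ) - (i:ℝ) = ((a:ℕ):ℝ) by push_cast; ring, Real.rpow_natCast]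
  have e2 : (α*γ) ^ (((i:ℝ) - ((i+a:ℕ):ℝ) - 1)/2) = (s ^ (a+1 : ℕ))⁻¹ := by
    rw [← hss, Real.mul_rpow hs.le hs.le, ← Real.rpow_add hs,
      show ((i:ℝ) - ((i+a:ℕ):ℝ) - 1)/2 + ((i:ℝ) - ((i+a:ℕ):ℝ) - 1)/2
        = -(((a+1:ℕ):ℝ)) by push_cast; ring,
      Real.rpow_neg hs.le, Real.rpow_natCast]
  rw [e1, e2]
  field_simp
  ring

lemma bmat_eq_lower (N : ℕ) (α γ s x : ℝ) (hα : 0 < α) (hγ : 0 < γ) (hs : 0 < s)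
    (hss : s*s = α*γ) (h2sx : 2*s*x = 1) (hαγ : α*γ ≤ 1/4) (i j : ℕ) (hij : j < i)
    (hi : i < N) :
    bmat N α γ i j = γ ^ ((i:ℝ) - (j:ℝ)) * (α*γ) ^ ((((j:ℝ)) - (i:ℝ) - 1)/2) *
      chebU j x * chebU ((N:ℤ) - i - 1) x / chebU N x := by
  obtain ⟨a, rfl⟩ : ∃ a, i = j + 1 + a := ⟨i - j - 1, by omega⟩
  obtain ⟨m, rfl⟩ : ∃ m, N = j + 1 + a + 1 + m := ⟨N - (j+1+a) - 1, by omega⟩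
  have hV : ∀ n : ℕ, Vseq (α*γ) n = s^n * chebU n x := by
    intro n; have := Vseq_cheb s x h2sx n; rwa [hss] at this
  have hUN : chebU (j+1+a+1+m : ℕ) x ≠ 0 := (chebU_ne s x hs h2sx _ hss hαγ _).ne'
  have hz : ((j+1+a+1+m : ℕ) : ℤ) - ((j+1+a : ℕ) : ℤ) - 1 = ((m : ℕ) : ℤ) := by
    push_cast; ring
  have hs0 : s ≠ 0 := hs.ne'
  have hU : ∀ n : ℕ, chebU n x = Vseq (α*γ) n / s^n := by
    intro n; rw [hV n]; field_simp
  have hVN0 : Vseq (α*γ) (j+1+a+1+m) ≠ 0 :=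
    (Vseq_pos (α*γ) (by nlinarith) hαγ _).ne'
  rw [bmat, if_neg (by omega : ¬ j + 1 + a ≤ j), show j + 1 + a - j = a + 1 by omega,
    show j+1+a+1+m-1-(j+1+a) = m by omega, hz, hU j, hU m, hU (j+1+a+1+m)]
  have e1 : γ ^ (((j+1+a:ℕ):ℝ) - (j:ℝ)) = γ ^ (a+1) := by
    rw [show ((j+1+a:ℕ):ℝ) - (j:ℝ) = ((a+1:ℕ):ℝ) by push_cast; ring, Real.rpow_natCast]
  have e2 : (α*γ) ^ (((j:ℝ) - ((j+1+a:ℕ):ℝ) - 1)/2) = (s ^ (a+2 : ℕ))⁻¹ := by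
    rw [← hss, Real.mul_rpow hs.le hs.le, ← Real.rpow_add hs,
      show ((j:ℝ) - ((j+1+a:ℕ):ℝ) - 1)/2 + ((j:ℝ) - ((j+1+a:ℕ):ℝ) - 1)/2
        = -(((a+2:ℕ):ℝ)) by push_cast; ring,
      Real.rpow_neg hs.le, Real.rpow_natCast]
  rw [e1, e2]
  field_simp
  ring

lemma fin_sum_ite (N m : ℕ) (f : Fin N → ℝ) :
    ∑ j : Fin N, (if (j:ℕ) = m then f j else 0) = if h : m < N then f ⟨m, h⟩ else 0 := by
  split_ifs with h
  · rw [Finset.sum_eq_single ⟨m, h⟩]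
    · rw [if_pos rfl]
    · intro j _ hj
      rw [if_neg (fun hc => hj (Fin.ext hc))]
    · intro hmem; exact absurd (Finset.mem_univ _) hmem
  · apply Finset.sum_eq_zero
    intro j _
    have hne : (j:ℕ) ≠ m := by
      intro hc; exact h (hc ▸ j.isLt)
    rw [if_neg hne]


/-- The explicit inverse of the `N×N` tridiagonal Toeplitz matrix with
`1` on the diagonal, `-α` on the superdiagonal and `-γ` on the subdiagonal, in terms of
Chebyshev polynomials of the second kind evaluated at `x = 1/(2√(αγ))`. -/
theorem stmt_10 (N : ℕ) (hN : 1 ≤ N) (α γ : ℝ) (hα : 0 < α) (hγ : 0 < γ)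
    (hαγ : α * γ ≤ 1 / 4) (x : ℝ) (hx : x = 1 / (2 * Real.sqrt (α * γ)))
    (J : Matrix (Fin N) (Fin N) ℝ)
    (hJ : ∀ i j : Fin N, J i j =
      if (i : ℕ) = (j : ℕ) then 1
      else if (j : ℕ) = (i : ℕ) + 1 then -α
      else if (i : ℕ) = (j : ℕ) + 1 then -γ
      else 0) :
    IsUnit J ∧
    (∀ i j : Fin N, (i : ℕ) ≤ (j : ℕ) →
      J⁻¹ i j = α ^ ((j : ℝ) - (i : ℝ)) * (α * γ) ^ (((i : ℝ) - (j : ℝ) - 1) / 2) *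
        chebU (i : ℕ) x * chebU ((N : ℤ) - (j : ℕ) - 1) x / chebU (N : ℤ) x) ∧
    (∀ i j : Fin N, (j : ℕ) < (i : ℕ) →
      J⁻¹ i j = γ ^ ((i : ℝ) - (j : ℝ)) * (α * γ) ^ (((j : ℝ) - (i : ℝ) - 1) / 2) *
        chebU (j : ℕ) x * chebU ((N : ℤ) - (i : ℕ) - 1) x / chebU (N : ℤ) x) := by
  have hc0 : (0:ℝ) < α * γ := mul_pos hα hγ
  set s : ℝ := Real.sqrt (α * γ) with hsdef
  have hs : 0 < s := Real.sqrt_pos.2 hc0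
  have hss : s * s = α * γ := Real.mul_self_sqrt hc0.le
  have h2sx : 2 * s * x = 1 := by
    rw [hx]; field_simp
  set B : Matrix (Fin N) (Fin N) ℝ := Matrix.of (fun i k : Fin N => bmat N α γ i k) with hB
  have hBapp : ∀ i k : Fin N, B i k = bmat N α γ i k := fun i k => rfl
  have hmul : J * B = 1 := by
    ext i k
    rw [Matrix.mul_apply, Matrix.one_apply]
    have hterm : ∀ j : Fin N, J i j * B j k =
        (if (j:ℕ) = (i:ℕ) then bmat N α γ i k else 0)
        + (if (j:ℕ) = (i:ℕ)+1 then -α * bmat N α γ j k else 0)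
        + (if (i:ℕ) = (j:ℕ)+1 then -γ * bmat N α γ j k else 0) := by
      intro j
      rw [hJ, hBapp]
      by_cases h1 : (j:ℕ) = (i:ℕ)
      · rw [if_pos h1.symm, if_pos h1, if_neg (by omega), if_neg (by omega),
          one_mul, add_zero, add_zero, h1]
      · by_cases h2 : (j:ℕ) = (i:ℕ)+1
        · rw [if_neg (by omega), if_pos h2, if_neg h1, if_pos h2, if_neg (by omega),
            zero_add, add_zero]
        · by_cases h3 : (i:ℕ) = (j:ℕ)+1
          · rw [if_neg (by omega), if_neg h2, if_pos h3, if_neg h1, if_neg h2, if_pos h3,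
              zero_add, zero_add]
          · rw [if_neg (by omega), if_neg h2, if_neg h3, if_neg h1, if_neg h2, if_neg h3,
              zero_mul, add_zero, add_zero]
    calc ∑ j : Fin N, J i j * B j k
        = ∑ j : Fin N, ((if (j:ℕ) = (i:ℕ) then bmat N α γ i k else 0)
          + (if (j:ℕ) = (i:ℕ)+1 then -α * bmat N α γ j k else 0)
          + (if (i:ℕ) = (j:ℕ)+1 then -γ * bmat N α γ j k else 0)) := by
            exact Finset.sum_congr rfl (fun j _ => hterm j)
      _ = (∑ j : Fin N, (if (j:ℕ) = (i:ℕ) then bmat N α γ i k else 0))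
          + (∑ j : Fin N, (if (j:ℕ) = (i:ℕ)+1 then -α * bmat N α γ j k else 0))
          + (∑ j : Fin N, (if (i:ℕ) = (j:ℕ)+1 then -γ * bmat N α γ j k else 0)) := by
            rw [Finset.sum_add_distrib, Finset.sum_add_distrib]
      _ = bmat N α γ i k + (if (i:ℕ)+1 < N then -α * bmat N α γ ((i:ℕ)+1) k else 0)
          + (if 1 ≤ (i:ℕ) then -γ * bmat N α γ ((i:ℕ)-1) k else 0) := by
            congr 1
            · congr 1
              · rw [fin_sum_ite, dif_pos i.isLt]
              · rw [fin_sum_ite]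
                split_ifs <;> rfl
            · have : ∀ j : Fin N, (if (i:ℕ) = (j:ℕ)+1 then -γ * bmat N α γ j k else 0)
                  = (if (j:ℕ) = (i:ℕ)-1 then
                      (if 1 ≤ (i:ℕ) then -γ * bmat N α γ j k else 0) else 0) := by
                intro j
                by_cases h1 : (i:ℕ) = (j:ℕ)+1
                · rw [if_pos h1, if_pos (by omega), if_pos (by omega)]
                · rw [if_neg h1]
                  by_cases h2 : (j:ℕ) = (i:ℕ)-1
                  · rw [if_pos h2, if_neg (by omega)]
                  · rw [if_neg h2]
              rw [Finset.sum_congr rfl (fun j _ => this j), fin_sum_ite]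
              by_cases h1 : 1 ≤ (i:ℕ)
              · rw [dif_pos (show (i:ℕ)-1 < N by omega), if_pos h1]
              · simp [h1]
      _ = if i = k then 1 else 0 := by
            rw [bmat_key N hN α γ hα hγ hαγ i k i.isLt k.isLt]
            by_cases h : i = k
            · rw [if_pos h, if_pos (by rw [h])]
            · rw [if_neg h, if_neg (fun hc => h (Fin.ext hc))]
  have hinv : J⁻¹ = B := Matrix.inv_eq_right_inv hmul
  refine ⟨(Matrix.isUnit_iff_isUnit_det J).2 (Matrix.isUnit_det_of_right_inverse hmul), ?_, ?_⟩
  · intro i j hij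
    rw [hinv, hBapp]
    exact bmat_eq_upper N α γ s x hα hγ hs hss h2sx hαγ i j hij j.isLt
  · intro i j hij
    rw [hinv, hBapp]
    exact bmat_eq_lower N α γ s x hα hγ hs hss h2sx hαγ i j hij i.isLt
end

section
/- Let n ≥ 2 and m ≥ 2 be integers and let ν ∈ H^n_m. Then there is at most one point μ ∈ D^n_m with ν − μ ∈ {e_1, …, e_n}. Moreover, if ν_i = ν_{i+1} for some 1 ≤ i < n, then such a μ, if it exists, equals ν − e_{i+1}; and if ν_1 − ν_n = m, then such a μ, if it exists, equals ν − e_1. -/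
open scoped Classical

/-- The (scaled) alcove `D^n_m = {x ∈ ℤ^n : x₁ > x₂ > ⋯ > xₙ > x₁ - m}`
(coordinates indexed by `Fin n`). -/
def alcove (n m : ℕ) (hn : 0 < n) : Set (Fin n → ℤ) :=
  {x | StrictAnti x ∧ x ⟨0, hn⟩ - (m : ℤ) < x ⟨n - 1, Nat.sub_lt hn Nat.one_pos⟩}

/-- The boundary `H^n_m` : some two consecutive coordinates are equal, or the first
minus the last coordinate equals `m`. -/
def boundary (n m : ℕ) (hn : 0 < n) : Set (Fin n → ℤ) :=
  {x | (∃ i : Fin n, ∃ h : (i : ℕ) + 1 < n, x i = x ⟨(i : ℕ) + 1, h⟩) ∨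
    x ⟨0, hn⟩ - x ⟨n - 1, Nat.sub_lt hn Nat.one_pos⟩ = (m : ℤ)}

/-- The number of lattice paths from `η` to `ν` using only positive unit steps, all of
whose points lie in the alcove `D^n_m`; a path is encoded by its list of step
directions. -/
noncomputable def pathCount (n m : ℕ) (hn : 0 < n) (η ν : Fin n → ℤ) : ℕ :=
  Set.ncard {w : List (Fin n) |
    (∀ k ≤ w.length,
      η + ((w.take k).map (fun i => (Pi.single i 1 : Fin n → ℤ))).sum ∈ alcove n m hn) ∧
    η + (w.map (fun i => (Pi.single i 1 : Fin n → ℤ))).sum = ν}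

/-- A boundary point `ν ∈ H^n_m` has at most one predecessor
`μ ∈ D^n_m` with `ν - μ` a standard basis vector; moreover, if `ν i = ν (i+1)` then
any such `μ` equals `ν - e (i+1)`, and if `ν 0 - ν (n-1) = m` then any such `μ`
equals `ν - e 0`. -/
theorem stmt_13 (n m : ℕ) (hn : 2 ≤ n) (hm : 2 ≤ m) (ν : Fin n → ℤ)
    (hν : ν ∈ boundary n m (by omega)) :
    (∀ μ₁ μ₂ : Fin n → ℤ, μ₁ ∈ alcove n m (by omega) → μ₂ ∈ alcove n m (by omega) →
      (∃ i : Fin n, ν - μ₁ = Pi.single i 1) → (∃ i : Fin n, ν - μ₂ = Pi.single i 1) →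
      μ₁ = μ₂) ∧
    (∀ (i : Fin n) (h : (i : ℕ) + 1 < n), ν i = ν ⟨(i : ℕ) + 1, h⟩ →
      ∀ μ : Fin n → ℤ, μ ∈ alcove n m (by omega) → (∃ j : Fin n, ν - μ = Pi.single j 1) →
        μ = ν - Pi.single (⟨(i : ℕ) + 1, h⟩ : Fin n) 1) ∧
    (ν ⟨0, by omega⟩ - ν ⟨n - 1, by omega⟩ = (m : ℤ) →
      ∀ μ : Fin n → ℤ, μ ∈ alcove n m (by omega) → (∃ j : Fin n, ν - μ = Pi.single j 1) →
        μ = ν - Pi.single (⟨0, by omega⟩ : Fin n) 1) := by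
  have hn0 : 0 < n := by omega
  have part2 : ∀ (i : Fin n) (h : (i : ℕ) + 1 < n), ν i = ν ⟨(i : ℕ) + 1, h⟩ →
      ∀ μ : Fin n → ℤ, μ ∈ alcove n m hn0 → (∃ j : Fin n, ν - μ = Pi.single j 1) →
        μ = ν - Pi.single (⟨(i : ℕ) + 1, h⟩ : Fin n) 1 := by
    rintro i h hi μ ⟨hanti, _⟩ ⟨j, hj⟩
    have hμ : μ = ν - Pi.single j 1 := by rw [← hj, sub_sub_cancel]
    have hlt : μ ⟨(i : ℕ) + 1, h⟩ < μ i :=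
      hanti (show i < ⟨(i : ℕ) + 1, h⟩ by simp [Fin.lt_def])
    rw [hμ] at hlt ⊢
    simp only [Pi.sub_apply, Pi.single_apply] at hlt
    by_cases hc : (⟨(i : ℕ) + 1, h⟩ : Fin n) = j
    · rw [hc]
    · exfalso
      by_cases hc2 : i = j
      · subst hc2
        simp [hc, hi.symm] at hlt
        omega
      · simp [hc, hc2, hi.symm] at hlt
  have part3 : ν ⟨0, hn0⟩ - ν ⟨n - 1, Nat.sub_lt hn0 Nat.one_pos⟩ = (m : ℤ) →
      ∀ μ : Fin n → ℤ, μ ∈ alcove n m hn0 → (∃ j : Fin n, ν - μ = Pi.single j 1) →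
        μ = ν - Pi.single (⟨0, hn0⟩ : Fin n) 1 := by
    rintro hb μ ⟨hanti, hgap⟩ ⟨j, hj⟩
    have hμ : μ = ν - Pi.single j 1 := by rw [← hj, sub_sub_cancel]
    rw [hμ] at hgap ⊢
    simp only [Pi.sub_apply, Pi.single_apply] at hgap
    by_cases hc : (⟨0, hn0⟩ : Fin n) = j
    · rw [hc]
    · exfalso
      by_cases hc2 : (⟨n - 1, Nat.sub_lt hn0 Nat.one_pos⟩ : Fin n) = j
      · subst hc2
        simp [hc] at hgap
        omega
      · simp [hc, hc2] at hgap
        omega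
  refine ⟨?_, part2, part3⟩
  intro μ₁ μ₂ h₁ h₂ e₁ e₂
  rcases hν with (⟨i, h, hi⟩ | hb)
  · rw [part2 i h hi μ₁ h₁ e₁, part2 i h hi μ₂ h₂ e₂]
  · rw [part3 hb μ₁ h₁ e₁, part3 hb μ₂ h₂ e₂]
end
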